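/- Let r ≥ 1 be an integer, let z ∈ (0,1), and let x_1,…,x_r be the points x_i = (√(1−z²)·cos(2πi/r), √(1−z²)·sin(2πi/r), z) on the unit sphere. Then −2·Σ_{i=1}^{r} Σ_{k=1}^{r} log ‖x_i + x_k‖ = −2·r²·log(1+z) − 2·r·log(1 − ((z−1)/(z+1))^r). -/

import Mathlib

open scoped Real

noncomputable section

/-- Points of `ℝ³`. -/
abbrev Esp := EuclideanSpace ℝ (Fin 3)

/-- The point of `S²` at height `z` and longitude `θ`. -/
def sphPt (z θ : ℝ) : Esp :=
  WithLp.toLp 2 ![Real.sqrt (1 - z^2) * Real.cos θ, Real.sqrt (1 - z^2) * Real.sin θ, z]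

/-!
With `ω = exp (2πi/r)`, the chord `‖x_i + x_k‖` equals `|(1 + z) ω^i + (1 - z) ω^k|`. As `k` runs
over a period, `ω^k` runs over the `r`-th roots of unity, so `∏_k ((1 + z) ω^i - ω^k (z - 1))`
is `((1 + z) ω^i)^r - (z - 1)^r = (1 + z)^r - (z - 1)^r` for every `i`, and the double sum of
logarithms is `r log ((1 + z)^r - (z - 1)^r)`.
-/

open Finset Complex

theorem Function.Periodic.prod_Icc_one_eq_prod_range {M : Type*} [CommMonoid M] {f : ℕ → M}
    {n : ℕ} (hf : Function.Periodic f n) : ∏ k ∈ Icc 1 n, f k = ∏ k ∈ range n, f k := by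
  cases n with
  | zero => simp
  | succ n =>
    rw [← Ico_add_one_right_eq_Icc, prod_Ico_eq_prod_range, Nat.add_sub_cancel,
      prod_range_succ, prod_range_succ']
    simp only [add_comm 1]
    rw [← zero_add (n + 1), hf]

theorem IsPrimitiveRoot.prod_range_sub_pow_mul {R : Type*} [CommRing R] [IsDomain R] {ω : R}
    {n : ℕ} (hω : IsPrimitiveRoot ω n) (hn : 0 < n) (x y : R) :
    ∏ k ∈ range n, (x - ω ^ k * y) = x ^ n - y ^ n := by
  have : NeZero n := ⟨hn.ne'⟩
  rw [hω.pow_sub_pow_eq_prod_sub_mul x y hn]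
  refine prod_nbij (ω ^ ·) (fun k _ ↦ (Polynomial.mem_nthRootsFinset hn 1).2 ?_)
    (fun a ha b hb ↦ hω.injOn_pow ha hb) (fun ζ hζ ↦ ?_) fun _ _ ↦ rfl
  · rw [← pow_mul, mul_comm, pow_mul, hω.pow_eq_one, one_pow]
  · obtain ⟨k, hk, rfl⟩ := hω.eq_pow_of_pow_eq_one ((Polynomial.mem_nthRootsFinset hn 1).1 hζ)
    exact ⟨k, mem_range.2 hk, rfl⟩

theorem norm_sphPt_add {z : ℝ} (hz : z ^ 2 ≤ 1) (θ φ : ℝ) :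
    ‖sphPt z θ + sphPt z φ‖ = ‖(1 + z) * exp (θ * I) + (1 - z) * exp (φ * I)‖ := by
  have hs : Real.sqrt (1 - z ^ 2) ^ 2 = 1 - z ^ 2 := Real.sq_sqrt (by linarith)
  rw [EuclideanSpace.norm_eq, Complex.norm_def, Complex.normSq_apply]
  congr 1
  simp only [PiLp.add_apply, sphPt, Fin.sum_univ_three, Matrix.cons_val_zero,
    Matrix.cons_val_one, Matrix.head_cons, Matrix.cons_val_two, Matrix.tail_cons,
    Real.norm_eq_abs, sq_abs, add_re, add_im, sub_re, sub_im, mul_re, mul_im, one_re, one_im,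
    ofReal_re, ofReal_im, exp_ofReal_mul_I_re, exp_ofReal_mul_I_im, add_zero, zero_mul, sub_zero,
    sub_self]
  linear_combination ((Real.cos θ + Real.cos φ) ^ 2 + (Real.sin θ + Real.sin φ) ^ 2) * hs
    + (1 - z ^ 2 - (1 + z) ^ 2) * (Real.sin_sq_add_cos_sq θ)
    + (1 - z ^ 2 - (1 - z) ^ 2) * (Real.sin_sq_add_cos_sq φ)

theorem sub_one_pow_lt_one_add_pow {z : ℝ} (hz : 0 < z) {r : ℕ} (hr : r ≠ 0) :
    (z - 1) ^ r < (1 + z) ^ r := by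
  have : |z - 1| < 1 + z := abs_sub_lt_iff.2 ⟨by linarith, by linarith⟩
  calc (z - 1) ^ r ≤ |z - 1| ^ r := abs_pow (z - 1) r ▸ le_abs_self _
    _ < (1 + z) ^ r := pow_lt_pow_left₀ this (abs_nonneg _) hr

theorem sum_log_norm_sphPt_add {r : ℕ} (hr : 0 < r) {z : ℝ} (hz0 : 0 < z) (hz1 : z < 1)
    (i : ℕ) :
    ∑ k ∈ Icc 1 r, Real.log ‖sphPt z (2 * π * i / r) + sphPt z (2 * π * k / r)‖
      = Real.log ((1 + z) ^ r - (z - 1) ^ r) := by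
  set ω := exp (2 * π * I / r)
  have hω : IsPrimitiveRoot ω r := isPrimitiveRoot_exp r hr.ne'
  have hexp (k : ℕ) : exp (↑(2 * π * k / r) * I) = ω ^ k := by
    rw [← exp_nat_mul]; push_cast; ring_nf
  set f : ℕ → ℂ := fun k ↦ (1 + z) * ω ^ i - ω ^ k * (z - 1)
  have hnorm (k : ℕ) : ‖sphPt z (2 * π * i / r) + sphPt z (2 * π * k / r)‖ = ‖f k‖ := by
    rw [norm_sphPt_add (by nlinarith), hexp, hexp]; congr 1; ring
  have hprod : ∏ k ∈ Icc 1 r, f k = (((1 + z) ^ r - (z - 1) ^ r : ℝ) : ℂ) := by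
    have hf : Function.Periodic f r := fun k ↦ by simp only [f, pow_add, hω.pow_eq_one, mul_one]
    rw [hf.prod_Icc_one_eq_prod_range, hω.prod_range_sub_pow_mul hr, mul_pow, ← pow_mul,
      mul_comm i, pow_mul, hω.pow_eq_one, one_pow, mul_one]
    push_cast; ring
  have hpos := sub_pos.2 (sub_one_pow_lt_one_add_pow hz0 hr.ne')
  have hf0 : ∀ k ∈ Icc 1 r, ‖f k‖ ≠ 0 := fun k hk ↦ norm_ne_zero_iff.2 <|
    prod_ne_zero_iff.1 (hprod ▸ ofReal_ne_zero.2 hpos.ne') k hk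
  simp_rw [hnorm, ← Real.log_prod hf0, ← norm_prod, hprod, norm_real, Real.norm_of_nonneg hpos.le]

/-- **Mutual energy of two antipodal parallels** (Lemma 4.1 of the paper).
If `x_1,…,x_r` are `r` equally spaced points on the parallel of height
`z ∈ (0,1)`, namely `x_i = (√(1-z²) cos(2πi/r), √(1-z²) sin(2πi/r), z)`, then
`-2 ∑_{i,k} log ‖x_i + x_k‖ = -2 r² log (1+z) - 2 r log (1 - ((z-1)/(z+1))^r)`. -/
theorem energy_antipodal_parallels
    (r : ℕ) (hr : 1 ≤ r) (z : ℝ) (hz0 : 0 < z) (hz1 : z < 1)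
    (x : ℕ → Esp) (hx : ∀ i, x i = sphPt z (2*π*i / r)) :
    -2 * ∑ i ∈ Finset.Icc 1 r, ∑ k ∈ Finset.Icc 1 r, Real.log ‖x i + x k‖
    = -2 * (r:ℝ)^2 * Real.log (1 + z)
      - 2 * (r:ℝ) * Real.log (1 - ((z - 1)/(z + 1))^r) := by
  have hfactor : (1 + z) ^ r - (z - 1) ^ r = (1 + z) ^ r * (1 - ((z - 1) / (z + 1)) ^ r) := by
    rw [div_pow, add_comm z, mul_sub, mul_one, mul_div_cancel₀ _ (by positivity)]
  have hinner (i : ℕ) :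
      ∑ k ∈ Icc 1 r, Real.log ‖x i + x k‖ = Real.log ((1 + z) ^ r - (z - 1) ^ r) := by
    simp_rw [hx]; exact sum_log_norm_sphPt_add hr hz0 hz1 i
  have hpos := hfactor ▸ sub_pos.2 (sub_one_pow_lt_one_add_pow hz0 (by omega))
  simp_rw [hinner, sum_const, Nat.card_Icc, Nat.add_sub_cancel, nsmul_eq_mul, hfactor]
  rw [Real.log_mul (by positivity) (right_ne_zero_of_mul hpos.ne'), Real.log_pow]
  ring
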